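/- arXiv:1508.07434 — 4 statements merged into one kernel-verified Lean document; each statement's English description precedes it below -/
import Mathlib

section
/- There exists t : ℕ → ℕ such that for every continuous f : ℝ × ℝ → ℝ satisfying |f(x,y) − f(x,z)| ≤ |y − z| and |f(x,y)| ≤ 1 for all x, y, z ∈ [−1,1], every integer k ≥ 1, every x ∈ [0,1], and all K, L ≥ t(k): |φ_K(x) − φ_L(x)| ≤ 1/k, where (φ_n) are the Picard iterates of f. (Effective Picard theorem, first clause: the Picard iterates are uniformly Cauchy with a rate independent of f.) -/
/-!
On `[0, 1]` the iterates stay in the unit box, because `|φ_n(x)| ≤ x`. There the Lipschitz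
condition gives the classical estimate `|φ_{n+1}(x) - φ_n(x)| ≤ x^{n+1} / (n+1)! ≤ 2^{-n}`, so the
iterates converge geometrically at a rate that does not depend on `f`, and `t(k) = k + 2` works.
-/

/-- The Picard iterates of `f`: `φ₀(x) = 0` and `φ_{n+1}(x) = ∫₀ˣ f(s, φ_n(s)) ds`. -/
noncomputable def picard (f : ℝ × ℝ → ℝ) : ℕ → ℝ → ℝ
  | 0 => fun _ => 0
  | n + 1 => fun x => ∫ s in (0:ℝ)..x, f (s, picard f n s)

open Set MeasureTheory
open scoped Nat

theorem two_pow_le_factorial_succ (n : ℕ) : 2 ^ n ≤ (n + 1)! := by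
  induction n with
  | zero => simp
  | succ n ih =>
    rw [pow_succ, Nat.factorial_succ (n + 1)]
    exact Nat.mul_le_mul (by omega) ih |>.trans_eq' (mul_comm _ _)

theorem dist_le_of_le_geometric_two {α : Type*} [PseudoMetricSpace α] [CompleteSpace α]
    {C : ℝ} {u : ℕ → α} (hu : ∀ n, dist (u n) (u (n + 1)) ≤ C / 2 / 2 ^ n)
    {N K L : ℕ} (hK : N ≤ K) (hL : N ≤ L) : dist (u K) (u L) ≤ 2 * C / 2 ^ N := by
  obtain ⟨a, ha⟩ := cauchySeq_tendsto_of_complete (cauchySeq_of_le_geometric_two hu)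
  have hC : 0 ≤ C := by linarith [(dist_nonneg).trans (hu 0)]
  have tail {M : ℕ} (hM : N ≤ M) : dist (u M) a ≤ C / 2 ^ N :=
    (dist_le_of_le_geometric_two_of_tendsto hu ha M).trans
      (div_le_div_of_nonneg_left hC (by positivity) (pow_le_pow_right₀ one_le_two hM))
  calc dist (u K) (u L) ≤ dist (u K) a + dist (u L) a := dist_triangle_right _ _ _
    _ ≤ C / 2 ^ N + C / 2 ^ N := add_le_add (tail hK) (tail hL)
    _ = 2 * C / 2 ^ N := by ring

theorem picard_succ_apply (f : ℝ × ℝ → ℝ) (n : ℕ) (x : ℝ) :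
    picard f (n + 1) x = ∫ s in (0:ℝ)..x, f (s, picard f n s) := rfl

section Picard

variable {f : ℝ × ℝ → ℝ}

theorem continuous_picard (hf : Continuous f) : ∀ n, Continuous (picard f n)
  | 0 => continuous_const
  | n + 1 => intervalIntegral.continuous_primitive
      (fun _ _ => (hf.comp (continuous_id.prodMk (continuous_picard hf n))).intervalIntegrable _ _) 0

theorem intervalIntegrable_picard (hf : Continuous f) (n : ℕ) (a b : ℝ) :
    IntervalIntegrable (fun s => f (s, picard f n s)) volume a b :=
  (hf.comp (continuous_id.prodMk (continuous_picard hf n))).intervalIntegrable a b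

theorem abs_picard_le (hbound : ∀ x ∈ Icc (0:ℝ) 1, ∀ y ∈ Icc (-1:ℝ) 1, |f (x, y)| ≤ 1) :
    ∀ n, ∀ x ∈ Icc (0:ℝ) 1, |picard f n x| ≤ x
  | 0, x, hx => by simpa [picard] using hx.1
  | n + 1, x, hx => by
    have h := intervalIntegral.norm_integral_le_of_norm_le_const (a := 0) (b := x) (C := 1)
      (f := fun s => f (s, picard f n s)) fun s hs => by
        rw [uIoc_of_le hx.1] at hs
        have hs' : s ∈ Icc (0:ℝ) 1 := ⟨hs.1.le, hs.2.trans hx.2⟩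
        exact hbound s hs' _ (abs_le.mp ((abs_picard_le hbound n s hs').trans hs'.2))
    simpa [picard_succ_apply, abs_of_nonneg hx.1] using h

theorem picard_mem_Icc (hbound : ∀ x ∈ Icc (0:ℝ) 1, ∀ y ∈ Icc (-1:ℝ) 1, |f (x, y)| ≤ 1)
    (n : ℕ) {x : ℝ} (hx : x ∈ Icc (0:ℝ) 1) : picard f n x ∈ Icc (-1:ℝ) 1 :=
  abs_le.mp ((abs_picard_le hbound n x hx).trans hx.2)

theorem abs_picard_succ_sub_picard_le (hf : Continuous f)
    (hbound : ∀ x ∈ Icc (0:ℝ) 1, ∀ y ∈ Icc (-1:ℝ) 1, |f (x, y)| ≤ 1)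
    (hlip : ∀ x ∈ Icc (0:ℝ) 1, ∀ y ∈ Icc (-1:ℝ) 1, ∀ z ∈ Icc (-1:ℝ) 1,
      |f (x, y) - f (x, z)| ≤ |y - z|) :
    ∀ n, ∀ x ∈ Icc (0:ℝ) 1, |picard f (n + 1) x - picard f n x| ≤ x ^ (n + 1) / (n + 1)!
  | 0, x, hx => by simpa [picard] using abs_picard_le hbound 1 x hx
  | n + 1, x, hx => by
    have hdiff : picard f (n + 2) x - picard f (n + 1) x
        = ∫ s in (0:ℝ)..x, (f (s, picard f (n + 1) s) - f (s, picard f n s)) := by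
      rw [picard_succ_apply, picard_succ_apply,
        intervalIntegral.integral_sub (intervalIntegrable_picard hf _ _ _)
          (intervalIntegrable_picard hf _ _ _)]
    have hint : ∫ s in (0:ℝ)..x, s ^ (n + 1) / ((n + 1)! : ℝ) = x ^ (n + 2) / (n + 2)! := by
      rw [intervalIntegral.integral_div, integral_pow, Nat.factorial_succ (n + 1)]
      push_cast
      field_simp
      ring
    rw [hdiff, ← hint, ← Real.norm_eq_abs]
    refine intervalIntegral.norm_integral_le_of_norm_le hx.1 (ae_of_all _ fun s hs => ?_)
      (((continuous_pow _).div_const _).intervalIntegrable (μ := volume) _ _)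
    have hs' : s ∈ Icc (0:ℝ) 1 := ⟨hs.1.le, hs.2.trans hx.2⟩
    exact (hlip s hs' _ (picard_mem_Icc hbound _ hs') _ (picard_mem_Icc hbound _ hs')).trans
      (abs_picard_succ_sub_picard_le hf hbound hlip n s hs')

end Picard

/-- Effective Picard theorem, first clause: the Picard iterates are uniformly
Cauchy with a rate independent of `f`. -/
theorem effective_picard_cauchy :
    ∃ t : ℕ → ℕ,
      ∀ f : ℝ × ℝ → ℝ, Continuous f →
        (∀ x ∈ Set.Icc (-1:ℝ) 1, ∀ y ∈ Set.Icc (-1:ℝ) 1, ∀ z ∈ Set.Icc (-1:ℝ) 1,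
          |f (x, y) - f (x, z)| ≤ |y - z| ∧ |f (x, y)| ≤ 1) →
        ∀ k : ℕ, 1 ≤ k → ∀ x ∈ Set.Icc (0:ℝ) 1, ∀ K L : ℕ, t k ≤ K → t k ≤ L →
          |picard f K x - picard f L x| ≤ 1 / (k : ℝ) := by
  refine ⟨fun k => k + 2, fun f hf hbox k hk x hx K L hK hL => ?_⟩
  have hunit : Icc (0:ℝ) 1 ⊆ Icc (-1) 1 := Icc_subset_Icc_left (by norm_num)
  have hbound : ∀ x ∈ Icc (0:ℝ) 1, ∀ y ∈ Icc (-1:ℝ) 1, |f (x, y)| ≤ 1 :=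
    fun x hx y hy => (hbox x (hunit hx) y hy y hy).2
  have hlip : ∀ x ∈ Icc (0:ℝ) 1, ∀ y ∈ Icc (-1:ℝ) 1, ∀ z ∈ Icc (-1:ℝ) 1,
      |f (x, y) - f (x, z)| ≤ |y - z| :=
    fun x hx y hy z hz => (hbox x (hunit hx) y hy z hz).1
  have hstep (n : ℕ) : dist (picard f n x) (picard f (n + 1) x) ≤ 2 / 2 / 2 ^ n := by
    rw [dist_comm, Real.dist_eq]
    calc |picard f (n + 1) x - picard f n x| ≤ x ^ (n + 1) / (n + 1)! :=
          abs_picard_succ_sub_picard_le hf hbound hlip n x hx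
      _ ≤ 1 / (n + 1)! := by gcongr; exact pow_le_one₀ hx.1 hx.2
      _ ≤ 1 / 2 ^ n := by gcongr; exact_mod_cast two_pow_le_factorial_succ n
      _ = 2 / 2 / 2 ^ n := by norm_num
  calc |picard f K x - picard f L x| ≤ 2 * 2 / 2 ^ (k + 2) :=
        dist_le_of_le_geometric_two hstep hK hL
    _ = 1 / 2 ^ k := by ring
    _ ≤ 1 / k := by gcongr; exact_mod_cast Nat.lt_two_pow_self.le
end

section
/- Let t : (ℕ → ℝ) → ℕ → ℕ be any functional such that for every c : ℕ → ℝ with c(n) ≤ c(n+1) ≤ 1 for all n, every integer k ≥ 1, and all N, M ≥ t(c)(k): |c(M) − c(N)| ≤ 1/k. Then for every f : ℕ → ℕ, if there exists n with f(n) = 0, then there exists n ≤ t(c_f)(2) with f(n) = 0. (Reversal for the effective monotone convergence theorem: any uniform modulus-of-convergence functional for bounded monotone sequences yields a bounded search solving Σ⁰₁ problems.) -/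
open scoped Classical

/-- For `f : ℕ → ℕ`, the nondecreasing sequence `c_f` with `c_f(m) = 1` iff
`f` has a zero below `m`, and `c_f(m) = 0` otherwise. -/
noncomputable def cf (f : ℕ → ℕ) (m : ℕ) : ℝ :=
  if ∃ i ≤ m, f i = 0 then 1 else 0

/-- Reversal for the effective monotone convergence theorem: any uniform
modulus-of-convergence functional for bounded monotone sequences yields a
bounded search solving `Σ⁰₁` problems. -/
theorem MCT_reversal (t : (ℕ → ℝ) → ℕ → ℕ)
    (ht : ∀ c : ℕ → ℝ, (∀ n : ℕ, c n ≤ c (n + 1) ∧ c (n + 1) ≤ 1) →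
      ∀ k : ℕ, 1 ≤ k → ∀ N M : ℕ, t c k ≤ N → t c k ≤ M →
        |c M - c N| ≤ 1 / (k : ℝ))
    (f : ℕ → ℕ) (hf : ∃ n, f n = 0) :
    ∃ n ≤ t (cf f) 2, f n = 0 := by
  by_contra h
  push_neg at h
  obtain ⟨n0, hn0⟩ := hf
  set T := t (cf f) 2 with hT
  have hmono : ∀ n : ℕ, cf f n ≤ cf f (n + 1) ∧ cf f (n + 1) ≤ 1 := by
    intro n
    unfold cf
    split_ifs with h1 h2 h2 <;> norm_num
    obtain ⟨i, hi, hfi⟩ := h1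
    exact h2 ⟨i, hi.trans (Nat.le_succ n), hfi⟩
  have hcT : cf f T = 0 := by
    unfold cf
    rw [if_neg]
    rintro ⟨i, hi, hfi⟩
    exact h i hi hfi
  have hcM : cf f (max n0 T) = 1 := by
    unfold cf
    rw [if_pos ⟨n0, le_max_left _ _, hn0⟩]
  have := ht (cf f) hmono 2 (by norm_num) T (max n0 T) le_rfl (le_max_right _ _)
  rw [hcT, hcM] at this
  norm_num at this
end

section
/- Let φ : (ℕ → ℝ) → ℝ be such that for every c : ℕ → ℝ with c(n) ≤ c(n+1) ≤ 1 for all n, φ(c) is the limit of the sequence c. Let Ξ : (ℕ → ℝ) → (ℕ → ℝ) → ℕ → ℕ be an extensionality functional for φ, i.e. for all c, s : ℕ → ℝ and all integers k ≥ 1: if c(i) = s(i) for all i ≤ Ξ(c,s,k), then |φ(c) − φ(s)| ≤ 1/k. Then for every f : ℕ → ℕ, if there exists n with f(n) = 0, then there exists n ≤ Ξ(0̄, c_f, 2) with f(n) = 0, where 0̄ denotes the constant-zero sequence. (Reversal for the monotone convergence theorem via an extensionality functional.) -/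
open scoped Classical

/-- Reversal for the monotone convergence theorem via an extensionality
functional. -/
theorem MCT_reversal_extensionality (φ : (ℕ → ℝ) → ℝ)
    (hφ : ∀ c : ℕ → ℝ, (∀ n : ℕ, c n ≤ c (n + 1) ∧ c (n + 1) ≤ 1) →
      Filter.Tendsto c Filter.atTop (nhds (φ c)))
    (Ξ : (ℕ → ℝ) → (ℕ → ℝ) → ℕ → ℕ)
    (hΞ : ∀ c s : ℕ → ℝ, ∀ k : ℕ, 1 ≤ k →
      (∀ i ≤ Ξ c s k, c i = s i) → |φ c - φ s| ≤ 1 / (k : ℝ))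
    (f : ℕ → ℕ) (hf : ∃ n, f n = 0) :
    ∃ n ≤ Ξ (fun _ => (0:ℝ)) (cf f) 2, f n = 0 := by
  by_contra h
  push_neg at h
  -- φ of zero sequence is 0
  have h0 : φ (fun _ => (0:ℝ)) = 0 := by
    have := hφ (fun _ => (0:ℝ)) (fun n => ⟨le_refl _, zero_le_one⟩)
    exact tendsto_nhds_unique this tendsto_const_nhds
  -- cf f is monotone and bounded
  have hmono : ∀ n : ℕ, cf f n ≤ cf f (n + 1) ∧ cf f (n + 1) ≤ 1 := by
    intro n
    refine ⟨?_, ?_⟩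
    · unfold cf
      split_ifs with h1 h2
      · exact le_refl 1
      · exact absurd (h1.imp fun i ⟨hi, hfi⟩ => ⟨hi.trans (Nat.le_succ n), hfi⟩) h2
      · norm_num
      · exact le_refl 0
    · unfold cf
      split_ifs <;> norm_num
  -- cf f tends to 1
  obtain ⟨n₀, hn₀⟩ := hf
  have h1 : φ (cf f) = 1 := by
    have htend : Filter.Tendsto (cf f) Filter.atTop (nhds 1) := by
      apply Filter.Tendsto.congr' _ tendsto_const_nhds
      filter_upwards [Filter.eventually_ge_atTop n₀] with m hm
      simp only [cf]
      rw [if_pos ⟨n₀, hm, hn₀⟩]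
    exact (tendsto_nhds_unique (hφ (cf f) hmono) htend)
  -- agreement up to Ξ
  have hagree : ∀ i ≤ Ξ (fun _ => (0:ℝ)) (cf f) 2, (fun _ => (0:ℝ)) i = cf f i := by
    intro i hi
    simp only [cf]
    rw [if_neg]
    rintro ⟨j, hj, hfj⟩
    exact h j (hj.trans hi) hfj
  have := hΞ (fun _ => (0:ℝ)) (cf f) 2 (by norm_num) hagree
  rw [h0, h1] at this
  norm_num at this
end

section
/- There exists a functional Θ assigning to each g : (ℕ → Bool) → ℕ a pair Θ(g) = (w, k), where w is a finite list of elements of ℕ → Bool and k ∈ ℕ, such that for every binary tree T: if for every α in the list w the initial segment ᾱ(g(α)) is not in T, then for every β : ℕ → Bool there exists i ≤ k such that β̄i is not in T. (Existence of the special fan functional Θ satisfying SCF(Θ): the finite test set w and the uniform bound k depend on g only, not on the tree T.) -/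
/-- The initial segment `ᾱn = (α 0, …, α (n−1))` of `α : ℕ → Bool`. -/
def initSeg (α : ℕ → Bool) (n : ℕ) : List Bool :=
  List.ofFn (fun i : Fin n => α i)

lemma initSeg_eq_of_agree (α β : ℕ → Bool) (n : ℕ) (h : ∀ i < n, β i = α i) :
    initSeg β n = initSeg α n := by
  unfold initSeg
  congr 1
  funext i
  exact h i i.isLt

lemma exists_cover (g : (ℕ → Bool) → ℕ) :
    ∃ (w : List (ℕ → Bool)) (k : ℕ),
      (∀ β : ℕ → Bool, ∃ α ∈ w, initSeg β (g α) = initSeg α (g α)) ∧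
      (∀ α ∈ w, g α ≤ k) := by
  have hcov : (Set.univ : Set (ℕ → Bool)) ⊆
      ⋃ α : ℕ → Bool, ⋂ i ∈ Finset.range (g α), {β : ℕ → Bool | β i = α i} := by
    intro β _
    exact Set.mem_iUnion.2 ⟨β, by simp⟩
  have hopen : ∀ α : ℕ → Bool,
      IsOpen (⋂ i ∈ Finset.range (g α), {β : ℕ → Bool | β i = α i}) := by
    intro α
    apply isOpen_biInter_finset
    intro i _
    have : {β : ℕ → Bool | β i = α i} = (fun β : ℕ → Bool => β i) ⁻¹' {x | x = α i} := rfl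
    rw [this]
    exact (continuous_apply i).isOpen_preimage _ (isOpen_discrete _)
  obtain ⟨t, ht⟩ := isCompact_univ.elim_finite_subcover _ hopen hcov
  refine ⟨t.toList, t.sup g, ?_, ?_⟩
  · intro β
    have := ht (Set.mem_univ β)
    rw [Set.mem_iUnion₂] at this
    obtain ⟨α, hα, hβ⟩ := this
    refine ⟨α, Finset.mem_toList.2 hα, initSeg_eq_of_agree α β _ ?_⟩
    intro i hi
    have := Set.mem_iInter₂.1 hβ i (Finset.mem_range.2 hi)
    exact this
  · intro α hα
    exact Finset.le_sup (Finset.mem_toList.1 hα)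

/-- Existence of the special fan functional `Θ` satisfying `SCF(Θ)`: for each
`g` it produces a finite test set `w` of binary sequences and a uniform bound
`k`, depending on `g` only, such that for every binary tree `T` (a set of
finite boolean sequences closed under initial segments): if `ᾱ(g α) ∉ T` for
every `α` in `w`, then every `β` satisfies `β̄i ∉ T` for some `i ≤ k`. -/
theorem special_fan_functional :
    ∃ Θ : ((ℕ → Bool) → ℕ) → List (ℕ → Bool) × ℕ,
      ∀ g : (ℕ → Bool) → ℕ, ∀ T : Set (List Bool),
        (∀ s t : List Bool, s <+: t → t ∈ T → s ∈ T) →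
        (∀ α ∈ (Θ g).1, initSeg α (g α) ∉ T) →
        ∀ β : ℕ → Bool, ∃ i ≤ (Θ g).2, initSeg β i ∉ T := by
  have h : ∀ g : (ℕ → Bool) → ℕ, ∃ p : List (ℕ → Bool) × ℕ,
      (∀ β : ℕ → Bool, ∃ α ∈ p.1, initSeg β (g α) = initSeg α (g α)) ∧
      (∀ α ∈ p.1, g α ≤ p.2) := by
    intro g
    obtain ⟨w, k, h1, h2⟩ := exists_cover g
    exact ⟨(w, k), h1, h2⟩
  refine ⟨fun g => (h g).choose, fun g T _ hT β => ?_⟩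
  obtain ⟨h1, h2⟩ := (h g).choose_spec
  obtain ⟨α, hα, heq⟩ := h1 β
  exact ⟨g α, h2 α hα, heq ▸ hT α hα⟩
end
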